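/- Let V : ℝ → ℝ be twice continuously differentiable, strictly increasing, strictly concave with -V'' ≥ ℓ > 0 on a relevant interval, let f be a bounded random variable with |f| ≤ C_f satisfying ℙ[f ≥ α] ≥ α and ℙ[f ≤ -α] ≥ α for some α ∈ (0,1]. Then for every x, h: the function γ(h) := E[V'(x + h f) f] satisfies |γ'(h)| = |E[V''(x + h f) f²]| ≥ α³ · inf_{y ∈ D} ℓ_V(y), where D is any interval containing all values x + h f and ℓ_V is a continuous positive lower bound for -V''. -/

import Mathlib

open MeasureTheory

/-! On the set `{α ≤ f}`, whose probability is at least `α`, we have `f² ≥ α²`, so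
`E[f²] ≥ α³`. Since `V'' ≤ -ℓ_V ≤ -inf_D ℓ_V` along the values `x + h f`, this gives
`-E[V''(x + h f) f²] ≥ α³ · inf_D ℓ_V`; continuity of `V''` and boundedness of `f` make
the integrand bounded, hence integrable. -/

section

variable {Ω : Type*} {mΩ : MeasurableSpace Ω} {μ : Measure Ω}

lemma integrable_comp_of_abs_le [IsFiniteMeasure μ] {φ : ℝ → ℝ} (hφ : Continuous φ)
    {f : Ω → ℝ} (hf : Measurable f) {C : ℝ} (hfb : ∀ ω, |f ω| ≤ C) :
    Integrable (fun ω => φ (f ω)) μ := by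
  obtain ⟨M, hM⟩ := (isCompact_Icc (a := -C) (b := C)).exists_bound_of_continuousOn
    hφ.continuousOn
  exact Integrable.of_bound (hφ.measurable.comp hf).aestronglyMeasurable M
    (Filter.Eventually.of_forall fun ω => hM _ (abs_le.mp (hfb ω)))

lemma sq_mul_measureReal_le_integral_sq [IsFiniteMeasure μ] {f : Ω → ℝ}
    (hf2 : Integrable (fun ω => f ω ^ 2) μ) {a : ℝ} (ha : 0 ≤ a) :
    a ^ 2 * μ.real {ω | a ≤ f ω} ≤ ∫ ω, f ω ^ 2 ∂μ := by
  have hsub : {ω | a ≤ f ω} ⊆ {ω | a ^ 2 ≤ f ω ^ 2} := fun ω hω =>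
    pow_le_pow_left₀ ha hω 2
  calc a ^ 2 * μ.real {ω | a ≤ f ω} ≤ a ^ 2 * μ.real {ω | a ^ 2 ≤ f ω ^ 2} :=
        mul_le_mul_of_nonneg_left (measureReal_mono hsub (measure_ne_top μ _)) (sq_nonneg a)
    _ ≤ ∫ ω, f ω ^ 2 ∂μ :=
      mul_meas_ge_le_integral_of_nonneg (Filter.Eventually.of_forall fun ω => sq_nonneg _)
        hf2 _

end

theorem second_derivative_lower_bound_general
    {Ω : Type*} {mΩ : MeasurableSpace Ω} (μ : Measure Ω) [IsProbabilityMeasure μ]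
    (f : Ω → ℝ) (hf : Measurable f) (Cf : ℝ) (hfb : ∀ ω, |f ω| ≤ Cf)
    (α : ℝ) (hα0 : 0 < α)
    (hup : ENNReal.ofReal α ≤ μ {ω | α ≤ f ω})
    (V : ℝ → ℝ) (hV : ContDiff ℝ 2 V)
    (ℓV : ℝ → ℝ) (hℓpos : ∀ y, 0 < ℓV y)
    (hℓle : ∀ y, ℓV y ≤ -(deriv (deriv V) y))
    (x h : ℝ) (D : Set ℝ) (hD : ∀ ω, x + h * f ω ∈ D) :
    α ^ 3 * (⨅ y : D, ℓV y) ≤ |∫ ω, deriv (deriv V) (x + h * f ω) * (f ω) ^ 2 ∂μ| := by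
  set c := ⨅ y : D, ℓV y
  have hc0 : 0 ≤ c := Real.iInf_nonneg fun y => (hℓpos y).le
  have hV'' : Continuous (deriv (deriv V)) := by
    have h2 := hV.continuous_iteratedDeriv' 2
    rw [iteratedDeriv_eq_iterate] at h2
    exact h2
  have hf2 : Integrable (fun ω => f ω ^ 2) μ :=
    integrable_comp_of_abs_le (φ := fun t => t ^ 2) (by fun_prop) hf hfb
  have hg : Integrable (fun ω => deriv (deriv V) (x + h * f ω) * f ω ^ 2) μ :=
    integrable_comp_of_abs_le (φ := fun t => deriv (deriv V) (x + h * t) * t ^ 2)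
      (by fun_prop) hf hfb
  have hgc : ∀ ω, deriv (deriv V) (x + h * f ω) * f ω ^ 2 ≤ -c * f ω ^ 2 := by
    intro ω
    have hcle : c ≤ ℓV (x + h * f ω) :=
      ciInf_le ⟨0, by rintro _ ⟨y, rfl⟩; exact (hℓpos y).le⟩ (⟨_, hD ω⟩ : D)
    exact mul_le_mul_of_nonneg_right (by linarith [hℓle (x + h * f ω)]) (sq_nonneg _)
  have hα3 : α ^ 3 ≤ ∫ ω, f ω ^ 2 ∂μ := by
    have hμ : α ≤ μ.real {ω | α ≤ f ω} :=
      (ENNReal.ofReal_le_iff_le_toReal (measure_ne_top μ _)).1 hup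
    nlinarith [sq_mul_measureReal_le_integral_sq hf2 hα0.le]
  calc α ^ 3 * c ≤ -∫ ω, -c * f ω ^ 2 ∂μ := by
        rw [integral_const_mul]; nlinarith
    _ ≤ -∫ ω, deriv (deriv V) (x + h * f ω) * f ω ^ 2 ∂μ :=
        neg_le_neg (integral_mono hg (hf2.const_mul _) hgc)
    _ ≤ _ := neg_le_abs _

/-- Under the uniform no-arbitrage condition, the second derivative (in `h`) of the
one-step expected utility is bounded away from zero:
`|E[V''(x + hf) f²]| ≥ α³ · inf_D ℓ_V`. -/
theorem second_derivative_lower_bound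
    {Ω : Type*} {mΩ : MeasurableSpace Ω} (μ : Measure Ω) [IsProbabilityMeasure μ]
    (f : Ω → ℝ) (hf : Measurable f) (Cf : ℝ) (hCf : 0 < Cf) (hfb : ∀ ω, |f ω| ≤ Cf)
    (α : ℝ) (hα0 : 0 < α) (hα1 : α ≤ 1)
    (hup : ENNReal.ofReal α ≤ μ {ω | α ≤ f ω})
    (hdown : ENNReal.ofReal α ≤ μ {ω | f ω ≤ -α})
    (V : ℝ → ℝ) (hV : ContDiff ℝ 2 V) (hVmono : StrictMono V)
    (hVconc : StrictConcaveOn ℝ Set.univ V)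
    (ℓV : ℝ → ℝ) (hℓcont : Continuous ℓV) (hℓpos : ∀ y, 0 < ℓV y)
    (hℓle : ∀ y, ℓV y ≤ -(deriv (deriv V) y))
    (x h : ℝ) (D : Set ℝ) (hD : ∀ ω, x + h * f ω ∈ D) :
    α ^ 3 * (⨅ y : D, ℓV y) ≤ |∫ ω, deriv (deriv V) (x + h * f ω) * (f ω) ^ 2 ∂μ| :=
  second_derivative_lower_bound_general (mΩ := mΩ) μ f hf Cf hfb α hα0 hup V hV ℓV hℓpos hℓle x h D
    hD
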